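/- In the symmetric group S_n ordered lexicographically as words, assign to each permutation σ its decomposition into wheels: an entry is an axle if it is the largest entry so far, and each wheel consists of an axle together with the subsequent smaller entries before the next axle. Then the permutation obtained from any ordered-block symbol f by arranging all wheels of f (across all blocks) in ascending order of axle equals the lexicographically least shuffle of f (a shuffle being a permutation preserving the relative order within each block of f). -/

import Mathlib

/-- The decomposition of a block (an ordered list) into *wheels*: an entry is an axle if
it is the largest entry so far, and a wheel consists of an axle together with the
subsequent smaller entries before the next axle. -/
def wheels : List ℕ → List (List ℕ)
  | [] => []
  | x :: l => (x :: l.takeWhile (· < x)) :: wheels (l.dropWhile (· < x))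
termination_by l => l.length
decreasing_by
  exact Nat.lt_succ_of_le (List.dropWhile_sublist _).length_le

/-- `l` is a shuffle of the symbol `f`: a permutation of all the entries of `f` preserving
the relative order within each block. -/
def IsShuffle (f : List (List ℕ)) (l : List ℕ) : Prop :=
  l.Perm f.flatten ∧ ∀ b ∈ f, b.Sublist l

/-! The wheel with the smallest axle `x` is the first wheel `x :: t` of its block, and every other
block begins with its own first axle, which is larger than `x`; so every entry of `x :: t` is smaller
than the first entry of every other block. A shuffle therefore either begins with `x :: t`, or deviates
from it at a position where it shows the first entry of another block, and is lexicographically larger.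
Removing `x :: t` from its block leaves a symbol whose wheels are the remaining ones, and induction on
the number of wheels concludes. -/

@[simp]
theorem wheels_nil : wheels [] = [] := by rw [wheels]

@[simp]
theorem wheels_cons (x : ℕ) (l : List ℕ) :
    wheels (x :: l) = (x :: l.takeWhile (· < x)) :: wheels (l.dropWhile (· < x)) := by
  rw [wheels]

theorem wheels_eq_nil_iff {b : List ℕ} : wheels b = [] ↔ b = [] := by
  cases b <;> simp

theorem le_headI_of_mem_wheels {b w : List ℕ} (hw : w ∈ wheels b) : b.headI ≤ w.headI := by
  induction b using wheels.induct generalizing w with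
  | case1 => simp at hw
  | case2 x l ih =>
    rcases List.mem_cons.mp (wheels_cons x l ▸ hw) with rfl | hw
    · simp
    · cases hd : l.dropWhile (· < x) with
      | nil => simp [hd] at hw
      | cons y d =>
        have hxy : x ≤ y := by
          simpa [hd] using List.head_dropWhile_not (· < x) (l := l) (by simp [hd])
        exact hxy.trans (by simpa [hd] using ih (hd ▸ hw))

theorem cons_takeWhile_mem_flatten_map_wheels {f : List (List ℕ)} {x : ℕ} {l : List ℕ}
    (h : x :: l ∈ f) : (x :: l.takeWhile (· < x)) ∈ (f.map wheels).flatten :=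
  List.mem_flatten.mpr ⟨_, List.mem_map_of_mem h, by simp⟩

def IsLexLeastShuffle (f : List (List ℕ)) (l : List ℕ) : Prop :=
  IsShuffle f l ∧ ∀ l' : List ℕ, IsShuffle f l' → l = l' ∨ List.Lex (· < ·) l l'

theorem IsShuffle.of_perm {f g : List (List ℕ)} {l : List ℕ} (hl : IsShuffle f l)
    (h : f.Perm g) : IsShuffle g l :=
  ⟨hl.1.trans h.flatten, fun b hb => hl.2 b (h.mem_iff.mpr hb)⟩

theorem IsLexLeastShuffle.of_perm {f g : List (List ℕ)} {l : List ℕ}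
    (hl : IsLexLeastShuffle f l) (h : f.Perm g) : IsLexLeastShuffle g l :=
  ⟨hl.1.of_perm h, fun l' hl' => hl.2 l' (hl'.of_perm h.symm)⟩

theorem IsShuffle.append_cons {t d r : List ℕ} {g : List (List ℕ)} (h : IsShuffle (d :: g) r) :
    IsShuffle ((t ++ d) :: g) (t ++ r) := by
  refine ⟨by simpa using h.1.append_left t, ?_⟩
  rintro c (_ | ⟨_, hc⟩)
  · exact (h.2 d List.mem_cons_self).append_left t
  · exact (h.2 c (List.mem_cons_of_mem _ hc)).trans (List.sublist_append_right t r)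

theorem IsShuffle.nodup {f : List (List ℕ)} {l : List ℕ} (h : IsShuffle f l)
    (hnd : f.flatten.Nodup) : l.Nodup :=
  h.1.nodup_iff.mpr hnd

theorem IsShuffle.exists_eq_cons {f : List (List ℕ)} {y : ℕ} {l : List ℕ}
    (h : IsShuffle f (y :: l)) (hnd : f.flatten.Nodup) : ∃ c ∈ f, ∃ c', c = y :: c' := by
  obtain ⟨c, hc, hyc⟩ := List.mem_flatten.mp (h.1.subset List.mem_cons_self)
  refine ⟨c, hc, ?_⟩
  rcases List.sublist_cons_iff.mp (h.2 c hc) with hsub | ⟨c', rfl, _⟩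
  · exact absurd (hsub.subset hyc) (List.nodup_cons.mp (h.nodup hnd)).1
  · exact ⟨c', rfl⟩

theorem IsShuffle.of_cons_cons {y : ℕ} {b l : List ℕ} {g : List (List ℕ)}
    (h : IsShuffle ((y :: b) :: g) (y :: l)) (hnd : ((y :: b) :: g).flatten.Nodup) :
    IsShuffle (b :: g) l := by
  refine ⟨by simpa using h.1.cons_inv, ?_⟩
  have hyg : ∀ c ∈ g, y ∉ c := fun c hc hyc => by
    simp only [List.flatten_cons, List.cons_append, List.nodup_cons, List.mem_append,
      List.mem_flatten] at hnd
    exact hnd.1 (Or.inr ⟨c, hc, hyc⟩)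
  rintro c (_ | ⟨_, hc⟩)
  · exact List.cons_sublist_cons.mp (h.2 _ List.mem_cons_self)
  · rcases List.sublist_cons_iff.mp (h.2 c (List.mem_cons_of_mem _ hc)) with hsub | ⟨c', rfl, _⟩
    · exact hsub
    · exact absurd List.mem_cons_self (hyg _ hc)

theorem IsShuffle.eq_append_or_lex {t d l : List ℕ} {g : List (List ℕ)}
    (hlt : ∀ z ∈ t, ∀ c ∈ g, c ≠ [] → z < c.headI) (hnd : ((t ++ d) :: g).flatten.Nodup)
    (hl : IsShuffle ((t ++ d) :: g) l) :
    (∃ r, l = t ++ r ∧ IsShuffle (d :: g) r) ∨ ∀ V, List.Lex (· < ·) (t ++ V) l := by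
  induction t generalizing l with
  | nil => exact Or.inl ⟨l, rfl, hl⟩
  | cons z t ih =>
    obtain ⟨y, l, rfl⟩ : ∃ y l', l = y :: l' := List.exists_cons_of_ne_nil fun h => by
      simpa [h] using hl.1.symm.subset (List.mem_flatten_of_mem List.mem_cons_self
        (List.mem_append_left d List.mem_cons_self))
    obtain ⟨c, hc, c', rfl⟩ := hl.exists_eq_cons hnd
    rcases List.mem_cons.mp hc with hc | hc
    · obtain ⟨rfl, -⟩ := List.cons.inj hc
      rw [List.cons_append] at hl hnd
      rcases ih (fun z hz => hlt z (List.mem_cons_of_mem _ hz)) (List.nodup_cons.mp hnd).2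
          (hl.of_cons_cons hnd) with ⟨r, rfl, hr⟩ | hlex
      · exact Or.inl ⟨r, rfl, hr⟩
      · exact Or.inr fun V => List.Lex.cons (hlex V)
    · exact Or.inr fun V => List.Lex.rel (hlt z List.mem_cons_self _ hc (List.cons_ne_nil _ _))

theorem IsLexLeastShuffle.append_cons {t d r : List ℕ} {g : List (List ℕ)}
    (hlt : ∀ z ∈ t, ∀ c ∈ g, c ≠ [] → z < c.headI) (hnd : ((t ++ d) :: g).flatten.Nodup)
    (h : IsLexLeastShuffle (d :: g) r) : IsLexLeastShuffle ((t ++ d) :: g) (t ++ r) := by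
  refine ⟨h.1.append_cons, fun l hl => ?_⟩
  rcases hl.eq_append_or_lex hlt hnd with ⟨r', rfl, hr'⟩ | hlex
  · rcases h.2 r' hr' with rfl | hlex
    · exact Or.inl rfl
    · exact Or.inr (hlex.append_left _ t)
  · exact Or.inr (hlex r)

theorem isLexLeastShuffle_nil {f : List (List ℕ)} (hf : (f.map wheels).flatten = []) :
    IsLexLeastShuffle f [] := by
  have hb : ∀ b ∈ f, b = [] := by
    simpa [List.flatten_eq_nil_iff, wheels_eq_nil_iff] using hf
  have hflat : f.flatten = [] := List.flatten_eq_nil_iff.mpr hb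
  refine ⟨⟨by rw [hflat], fun b hbf => by rw [hb b hbf]⟩, fun l hl => ?_⟩
  exact Or.inl (hflat ▸ hl.1).eq_nil.symm

theorem exists_first_wheel {f : List (List ℕ)} {w : List ℕ} {W : List (List ℕ)}
    (hnd : f.flatten.Nodup) (hperm : (w :: W).Perm (f.map wheels).flatten)
    (hw : ∀ v ∈ W, w.headI < v.headI) :
    ∃ x l g, f.Perm ((x :: l) :: g) ∧ w = x :: l.takeWhile (· < x) ∧
      ∀ c ∈ g, c ≠ [] → x < c.headI := by
  obtain ⟨_, hb, hwb⟩ := List.mem_flatten.mp (hperm.subset List.mem_cons_self)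
  obtain ⟨b, hbf, rfl⟩ := List.mem_map.mp hb
  obtain ⟨x, l, rfl⟩ := List.exists_cons_of_ne_nil (l := b) fun h => by simp [h] at hwb
  have hfg := List.perm_cons_erase hbf
  have hw0 : w = x :: l.takeWhile (· < x) := by
    rcases List.mem_cons.mp (hperm.symm.subset (cons_takeWhile_mem_flatten_map_wheels hbf))
      with h | h
    · exact h.symm
    · exact absurd (hw _ h) (le_headI_of_mem_wheels hwb).not_gt
  subst hw0
  refine ⟨x, l, f.erase (x :: l), hfg, rfl, fun c hc hc0 => ?_⟩
  obtain ⟨y, lc, rfl⟩ := List.exists_cons_of_ne_nil hc0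
  rcases List.mem_cons.mp (hperm.symm.subset
      (cons_takeWhile_mem_flatten_map_wheels (List.mem_of_mem_erase hc))) with h | h
  · obtain ⟨rfl, -⟩ := List.cons.inj h
    have hnd' := hfg.flatten.nodup_iff.mp hnd
    simp only [List.flatten_cons, List.nodup_append] at hnd'
    exact (hnd'.2.2 y List.mem_cons_self y
      (List.mem_flatten_of_mem hc List.mem_cons_self) rfl).elim
  · simpa using hw _ h

theorem sorted_wheels_is_lex_least_shuffle_general (f : List (List ℕ))
    (hnd : f.flatten.Nodup)
    (W : List (List ℕ)) (hperm : W.Perm (f.map wheels).flatten)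
    (hsorted : W.Pairwise fun u v => u.headI < v.headI) :
    IsShuffle f W.flatten ∧
      ∀ l : List ℕ, IsShuffle f l → W.flatten = l ∨ List.Lex (· < ·) W.flatten l := by
  change IsLexLeastShuffle f W.flatten
  induction W generalizing f with
  | nil => exact isLexLeastShuffle_nil hperm.nil_eq.symm
  | cons w W ih =>
    obtain ⟨hw, hW⟩ := List.pairwise_cons.mp hsorted
    obtain ⟨x, l, g, hfg, rfl, hxg⟩ := exists_first_wheel hnd hperm hw
    set t := x :: l.takeWhile (· < x)
    set d := l.dropWhile (· < x)
    have hfg : f.Perm ((t ++ d) :: g) := by simpa [t, d] using hfg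
    have htd : ((t ++ d) :: g).flatten.Nodup := hfg.flatten.nodup_iff.mp hnd
    have hWd : W.Perm ((d :: g).map wheels).flatten := by
      simpa [t, d] using hperm.trans (hfg.map wheels).flatten
    have hd := ih (d :: g) (htd.sublist (by simp)) hWd hW
    have htg : ∀ z ∈ t, ∀ c ∈ g, c ≠ [] → z < c.headI := by
      intro z hz c hc hc0
      rcases List.mem_cons.mp hz with rfl | hz
      · exact hxg c hc hc0
      · exact (by simpa using List.mem_takeWhile_imp hz : z < x).trans (hxg c hc hc0)
    exact (hd.append_cons htg htd).of_perm hfg.symm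

/-- for a symbol `f` (ordered sequence of nonempty internally ordered
blocks with distinct entries), the permutation obtained by arranging all the wheels of
`f` (across all blocks) in ascending order of axle is the lexicographically least shuffle
of `f`. -/
theorem sorted_wheels_is_lex_least_shuffle (f : List (List ℕ))
    (hne : ∀ b ∈ f, b ≠ []) (hnd : f.flatten.Nodup)
    (W : List (List ℕ)) (hperm : W.Perm (f.map wheels).flatten)
    (hsorted : W.Pairwise fun u v => u.headI < v.headI) :
    IsShuffle f W.flatten ∧
      ∀ l : List ℕ, IsShuffle f l → W.flatten = l ∨ List.Lex (· < ·) W.flatten l :=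
  sorted_wheels_is_lex_least_shuffle_general f hnd W hperm hsorted
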